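/- arXiv:1911.11469 — 3 statements merged into one kernel-verified Lean document; each statement's English description precedes it below -/
import Mathlib

section
/- For a nonzero ring R and a > 0, the identity on R^c is a biased weak pullback projection of the cospan R^a ⟶0 0 ⟵0 R^c, but there is no ω : R^c → R^a making (id, ω) into a weak pullback. -/
/-- For a nonzero ring `R` and `a > 0`, the identity on `R^c` is a biased weak pullback
projection of the cospan `R^a ⟶ 0 ⟵ R^c`, but there is no `ω : R^c → R^a` making
`(id, ω)` into a weak pullback. -/
theorem stmt5 {R : Type*} [Ring R] [Nontrivial R] (a c : ℕ) (ha : 1 ≤ a) :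
    (∀ (t : ℕ) (τ : (Fin t → R) →ₗ[R] (Fin c → R)),
        (∃ σ : (Fin t → R) →ₗ[R] (Fin a → R),
          (0 : (Fin a → R) →ₗ[R] (Fin 0 → R)).comp σ =
            (0 : (Fin c → R) →ₗ[R] (Fin 0 → R)).comp τ) →
        ∃ u : (Fin t → R) →ₗ[R] (Fin c → R), LinearMap.id.comp u = τ) ∧
    ¬ ∃ ω : (Fin c → R) →ₗ[R] (Fin a → R),
        ∀ (t : ℕ) (σ : (Fin t → R) →ₗ[R] (Fin a → R)) (τ : (Fin t → R) →ₗ[R] (Fin c → R)),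
          ∃ u : (Fin t → R) →ₗ[R] (Fin c → R), LinearMap.id.comp u = τ ∧ ω.comp u = σ := by
  constructor
  · intro t τ _
    exact ⟨τ, rfl⟩
  · rintro ⟨ω, hω⟩
    obtain ⟨u, hu1, hu2⟩ := hω a LinearMap.id 0
    have hu0 : u = 0 := by simpa using hu1
    subst hu0
    have h := LinearMap.congr_fun hu2 (Pi.single ⟨0, ha⟩ (1 : R))
    simp only [LinearMap.comp_zero, LinearMap.zero_apply, LinearMap.id_apply] at h
    have h1 := congrFun h ⟨0, ha⟩
    simp at h1
end

section
/- The row kernel over R = k[x_i,z]/⟨x_i z⟩ of a matrix with entries in the subring R_n decomposes as the direct sum of the row kernel over R_n and the product of the ideal ⟨x_i : i > n⟩ with the row kernel over k[x] of the x-part of the matrix. -/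
set_option synthInstance.maxHeartbeats 1000000
set_option maxHeartbeats 1000000

open MvPolynomial

/-- The ideal of relations `⟨x_i z : i ∈ ℕ⟩` in `k[x_i, z : i ∈ ℕ]`, where the variable `z`
is encoded as `none` and `x_i` as `some i`. -/
noncomputable def relIdeal8 (k : Type*) [Field k] : Ideal (MvPolynomial (Option ℕ) k) :=
  Ideal.span (Set.range fun i : ℕ => X (some i) * X none)

/-- The ring `R = k[x_i, z : i ∈ ℕ] / ⟨x_i z : i ∈ ℕ⟩`. -/
abbrev Rring8 (k : Type*) [Field k] := MvPolynomial (Option ℕ) k ⧸ relIdeal8 k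

/-- The subring `R_n = k[x_0, …, x_{n-1}, z]/⟨x_i z⟩`, regarded as a subring of `R`:
the `k`-subalgebra generated by `z̄` and `x̄_0, …, x̄_{n-1}`. -/
noncomputable def Rsub8 (k : Type*) [Field k] (n : ℕ) : Subalgebra k (Rring8 k) :=
  Algebra.adjoin k
    (insert (Ideal.Quotient.mk (relIdeal8 k) (X none))
      ((fun i : ℕ => Ideal.Quotient.mk (relIdeal8 k) (X (some i))) '' Set.Iio n))

namespace Stmt8Aux

variable {k : Type*} [Field k]

/-- Kill `z` (the variable `none`). -/
noncomputable def px : MvPolynomial (Option ℕ) k →ₐ[k] MvPolynomial ℕ k :=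
  aeval fun v : Option ℕ => v.elim 0 X

/-- Kill all the `x_i` (the variables `some i`). -/
noncomputable def pz : MvPolynomial (Option ℕ) k →ₐ[k] Polynomial k :=
  aeval fun v : Option ℕ => v.elim Polynomial.X fun _ => 0

@[simp] lemma px_X_none : px (k := k) (X none) = 0 := by simp [px]
@[simp] lemma px_X_some (i : ℕ) : px (k := k) (X (some i)) = X i := by simp [px]
@[simp] lemma pz_X_none : pz (k := k) (X none) = Polynomial.X := by simp [pz]
@[simp] lemma pz_X_some (i : ℕ) : pz (k := k) (X (some i)) = 0 := by simp [pz]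

lemma px_rel : ∀ p ∈ relIdeal8 k, px p = 0 := by
  intro p hp
  have h : relIdeal8 k ≤ RingHom.ker (px (k := k)).toRingHom := by
    rw [relIdeal8, Ideal.span_le]
    rintro _ ⟨i, rfl⟩
    simp [RingHom.mem_ker]
  exact h hp

lemma pz_rel : ∀ p ∈ relIdeal8 k, pz p = 0 := by
  intro p hp
  have h : relIdeal8 k ≤ RingHom.ker (pz (k := k)).toRingHom := by
    rw [relIdeal8, Ideal.span_le]
    rintro _ ⟨i, rfl⟩
    simp [RingHom.mem_ker]
  exact h hp

/-- The `x`-part projection on `R`. -/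
noncomputable def Pix : Rring8 k →ₐ[k] MvPolynomial ℕ k :=
  Ideal.Quotient.liftₐ (relIdeal8 k) px px_rel

/-- The `z`-part projection on `R`. -/
noncomputable def Piz : Rring8 k →ₐ[k] Polynomial k :=
  Ideal.Quotient.liftₐ (relIdeal8 k) pz pz_rel

@[simp] lemma Pix_mk (p : MvPolynomial (Option ℕ) k) :
    Pix (Ideal.Quotient.mk (relIdeal8 k) p) = px p :=
  Ideal.Quotient.liftₐ_apply _ _ _ _

@[simp] lemma Piz_mk (p : MvPolynomial (Option ℕ) k) :
    Piz (Ideal.Quotient.mk (relIdeal8 k) p) = pz p :=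
  Ideal.Quotient.liftₐ_apply _ _ _ _

lemma px_rename (e : MvPolynomial ℕ k) : px (rename some e) = e := by
  rw [px, aeval_rename]
  have h : ((fun v : Option ℕ => v.elim 0 X) ∘ some) = (X : ℕ → MvPolynomial ℕ k) := rfl
  rw [h, aeval_X_left_apply]

lemma pz_rename (e : MvPolynomial ℕ k) :
    pz (rename some e) = Polynomial.C (constantCoeff e) := by
  rw [pz, aeval_rename]
  have h : ((fun v : Option ℕ => v.elim Polynomial.X fun _ => (0 : Polynomial k)) ∘ some)
      = fun _ : ℕ => (0 : Polynomial k) := rfl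
  rw [h, aeval_zero']
  rfl

lemma sub_x_mem (p : MvPolynomial (Option ℕ) k) :
    p - rename some (px p) ∈ Ideal.span ({X none} : Set (MvPolynomial (Option ℕ) k)) := by
  induction p using MvPolynomial.induction_on with
  | C a =>
    have h : (C a : MvPolynomial (Option ℕ) k) - rename some (px (C a)) = 0 := by
      simp [px, algebraMap_eq]
    rw [h]; exact zero_mem _
  | add p q hp hq =>
    have h : (p + q) - rename some (px (p + q))
        = (p - rename some (px p)) + (q - rename some (px q)) := by
      rw [map_add, map_add]; ring
    rw [h]; exact add_mem hp hq
  | mul_X p v hp =>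
    cases v with
    | none =>
      have h : p * X none - rename some (px (p * X none)) = p * X none := by
        simp [px]
      rw [h]
      exact Ideal.mul_mem_left _ p (Ideal.subset_span rfl)
    | some i =>
      have h : p * X (some i) - rename some (px (p * X (some i)))
          = (p - rename some (px p)) * X (some i) := by
        rw [map_mul, px_X_some, map_mul, rename_X]; ring
      rw [h]
      exact Ideal.mul_mem_right _ _ hp

lemma sub_z_mem (p : MvPolynomial (Option ℕ) k) :
    p - Polynomial.aeval (X none) (pz p)
      ∈ Ideal.span (X '' Set.range (some : ℕ → Option ℕ)) := by
  induction p using MvPolynomial.induction_on with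
  | C a =>
    have h : (C a : MvPolynomial (Option ℕ) k) - Polynomial.aeval (X none) (pz (C a)) = 0 := by
      simp [pz, algebraMap_eq]
    rw [h]; exact zero_mem _
  | add p q hp hq =>
    have h : (p + q) - Polynomial.aeval (X none) (pz (p + q))
        = (p - Polynomial.aeval (X none) (pz p)) + (q - Polynomial.aeval (X none) (pz q)) := by
      rw [map_add, map_add]; ring
    rw [h]; exact add_mem hp hq
  | mul_X p v hp =>
    cases v with
    | none =>
      have h : p * X none - Polynomial.aeval (X none) (pz (p * X none))
          = (p - Polynomial.aeval (X none) (pz p)) * X none := by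
        rw [map_mul, pz_X_none, map_mul, Polynomial.aeval_X]; ring
      rw [h]
      exact Ideal.mul_mem_right _ _ hp
    | some i =>
      have h : p * X (some i) - Polynomial.aeval (X none) (pz (p * X (some i)))
          = p * X (some i) := by simp [pz]
      rw [h]
      exact Ideal.mul_mem_left _ p (Ideal.subset_span ⟨some i, ⟨i, rfl⟩, rfl⟩)

lemma mul_X_none_mem {q : MvPolynomial (Option ℕ) k}
    (hq : q ∈ Ideal.span (X '' Set.range (some : ℕ → Option ℕ))) :
    X none * q ∈ relIdeal8 k := by
  refine Submodule.span_induction ?_ ?_ ?_ ?_ hq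
  · rintro _ ⟨_, ⟨i, rfl⟩, rfl⟩
    exact Ideal.subset_span ⟨i, by ring⟩
  · simpa using (relIdeal8 k).zero_mem
  · intro x y _ _ hx hy
    rw [mul_add]; exact add_mem hx hy
  · intro a x _ hx
    rw [smul_eq_mul, mul_left_comm]
    exact Ideal.mul_mem_left _ a hx

lemma mem_rel (p : MvPolynomial (Option ℕ) k) (hx : px p = 0) (hz : pz p = 0) :
    p ∈ relIdeal8 k := by
  have h1 : p ∈ Ideal.span ({X none} : Set (MvPolynomial (Option ℕ) k)) := by
    have := sub_x_mem p
    rwa [hx, map_zero, sub_zero] at this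
  obtain ⟨q, hq⟩ := Ideal.mem_span_singleton'.mp h1
  have hzq : pz q = 0 := by
    have h2 : pz q * Polynomial.X = 0 := by
      rw [← pz_X_none, ← map_mul, hq, hz]
    rcases mul_eq_zero.mp h2 with h | h
    · exact h
    · exact absurd h Polynomial.X_ne_zero
  have h3 : q ∈ Ideal.span (X '' Set.range (some : ℕ → Option ℕ)) := by
    have := sub_z_mem q
    rwa [hzq, map_zero, sub_zero] at this
  rw [← hq, mul_comm]
  exact mul_X_none_mem h3

lemma inj (r : Rring8 k) (hx : Pix r = 0) (hz : Piz r = 0) : r = 0 := by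
  obtain ⟨p, rfl⟩ := Ideal.Quotient.mk_surjective r
  rw [Ideal.Quotient.eq_zero_iff_mem]
  exact mem_rel p (by rwa [Pix_mk] at hx) (by rwa [Piz_mk] at hz)

lemma mem_adjoin_z (r : Rring8 k) (hx : Pix r = 0) :
    r ∈ Algebra.adjoin k ({Ideal.Quotient.mk (relIdeal8 k) (X none)} : Set (Rring8 k)) := by
  obtain ⟨p, rfl⟩ := Ideal.Quotient.mk_surjective r
  rw [Pix_mk] at hx
  have h1 : p ∈ Ideal.span ({X none} : Set (MvPolynomial (Option ℕ) k)) := by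
    have := sub_x_mem p
    rwa [hx, map_zero, sub_zero] at this
  obtain ⟨q, hq⟩ := Ideal.mem_span_singleton'.mp h1
  have h2 : X none * (q - Polynomial.aeval (X none) (pz q)) ∈ relIdeal8 k :=
    mul_X_none_mem (sub_z_mem q)
  have h3 : Ideal.Quotient.mk (relIdeal8 k) p
      = Ideal.Quotient.mk (relIdeal8 k) (Polynomial.aeval (X none) (pz q) * X none) := by
    rw [Ideal.Quotient.mk_eq_mk_iff_sub_mem, ← hq]
    have h4 : q * X none - Polynomial.aeval (X none) (pz q) * X none
        = X none * (q - Polynomial.aeval (X none) (pz q)) := by ring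
    rw [h4]; exact h2
  rw [h3, map_mul]
  apply mul_mem
  · rw [Algebra.adjoin_singleton_eq_range_aeval]
    refine ⟨pz q, ?_⟩
    have := Polynomial.aeval_algHom_apply (Ideal.Quotient.mkₐ k (relIdeal8 k)) (X none) (pz q)
    simpa [Ideal.Quotient.mkₐ_eq_mk] using this
  · exact Algebra.subset_adjoin rfl

/-! ### Grading by the high variables -/

/-- Weight function recording the multidegree in the variables `x_i`, `i ≥ n`. -/
noncomputable def wt (n : ℕ) : ℕ → (ℕ →₀ ℕ) := fun i =>
  if n ≤ i then Finsupp.single i 1 else 0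

lemma weight_wt_apply (n : ℕ) (m : ℕ →₀ ℕ) (j : ℕ) :
    (Finsupp.weight (wt n) m) j = if n ≤ j then m j else 0 := by
  classical
  rw [Finsupp.weight_apply, Finsupp.sum_apply, Finsupp.sum]
  have hterm : ∀ i, (m i • wt n i) j = if n ≤ i then (if i = j then m i else 0) else 0 := by
    intro i
    rw [Finsupp.smul_apply, wt]
    by_cases hni : n ≤ i
    · rw [if_pos hni, if_pos hni, Finsupp.single_apply]
      by_cases hij : i = j
      · rw [if_pos hij, if_pos hij, smul_eq_mul, mul_one]
      · rw [if_neg hij, if_neg hij, smul_eq_mul, mul_zero]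
    · rw [if_neg hni, if_neg hni, Finsupp.coe_zero, Pi.zero_apply, smul_eq_mul, mul_zero]
  rw [Finset.sum_congr rfl fun i _ => hterm i]
  by_cases hj : n ≤ j
  · rw [if_pos hj]
    by_cases hmj : j ∈ m.support
    · rw [Finset.sum_eq_single j]
      · rw [if_pos hj, if_pos rfl]
      · intro i _ hij
        by_cases hni : n ≤ i
        · rw [if_pos hni, if_neg hij]
        · rw [if_neg hni]
      · intro h; exact absurd hmj h
    · have hmj0 : m j = 0 := Finsupp.notMem_support_iff.mp hmj
      rw [hmj0]
      apply Finset.sum_eq_zero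
      intro i hi
      by_cases hni : n ≤ i
      · rw [if_pos hni]
        rcases eq_or_ne i j with rfl | hij
        · rw [if_pos rfl]; exact hmj0
        · rw [if_neg hij]
      · rw [if_neg hni]
  · rw [if_neg hj]
    apply Finset.sum_eq_zero
    intro i _
    by_cases hni : n ≤ i
    · rw [if_pos hni]
      have hij : i ≠ j := fun h => hj (h ▸ hni)
      rw [if_neg hij]
    · rw [if_neg hni]

lemma weight_of_mem_support {n : ℕ} {d : ℕ →₀ ℕ} {q : MvPolynomial ℕ k} {m : ℕ →₀ ℕ}
    (hm : m ∈ (weightedHomogeneousComponent (wt n) d q).support) :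
    Finsupp.weight (wt n) m = d := by
  classical
  have := MvPolynomial.mem_support_iff.mp hm
  rw [coeff_weightedHomogeneousComponent] at this
  by_contra h
  rw [if_neg h] at this
  exact this rfl

lemma low_isHomog {n : ℕ} {e : MvPolynomial ℕ k} (he : e ∈ supported k (Set.Iio n)) :
    IsWeightedHomogeneous (wt n) e 0 := by
  intro m hm
  ext j
  rw [weight_wt_apply]
  by_cases hj : n ≤ j
  · rw [if_pos hj]
    by_contra hmj
    have hjv : j ∈ e.vars := (mem_vars j).mpr
      ⟨m, MvPolynomial.mem_support_iff.mpr hm, Finsupp.mem_support_iff.mpr hmj⟩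
    have := mem_supported.mp he hjv
    simp only [Set.mem_Iio] at this
    omega
  · rw [if_neg hj]; rfl

lemma decomp (n : ℕ) (q : MvPolynomial ℕ k) (D : Finset (ℕ →₀ ℕ))
    (hD : ∀ m ∈ q.support, Finsupp.weight (wt n) m ∈ D) :
    ∑ d ∈ D, weightedHomogeneousComponent (wt n) d q = q := by
  classical
  have h1 : (Function.support fun d => weightedHomogeneousComponent (wt n) d q) ⊆ ↑D := by
    intro d hd
    rw [Function.mem_support] at hd
    by_contra hdD
    exact hd (weightedHomogeneousComponent_eq_zero' d q fun m hm he => hdD (he ▸ hD m hm))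
  rw [← finsum_eq_finset_sum_of_support_subset _ h1, sum_weightedHomogeneousComponent]

lemma E_mul_low (n : ℕ) (d : ℕ →₀ ℕ) (p e : MvPolynomial ℕ k)
    (he : e ∈ supported k (Set.Iio n)) :
    weightedHomogeneousComponent (wt n) d (p * e)
      = weightedHomogeneousComponent (wt n) d p * e := by
  classical
  set D : Finset (ℕ →₀ ℕ) := insert d (p.support.image (Finsupp.weight (wt n))) with hDdef
  have hDp : ∀ m ∈ p.support, Finsupp.weight (wt n) m ∈ D := fun m hm =>
    Finset.mem_insert_of_mem (Finset.mem_image_of_mem _ hm)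
  have h0 := decomp n p D hDp
  have he0 : IsWeightedHomogeneous (wt n) e 0 := low_isHomog he
  have key : ∀ d' : ℕ →₀ ℕ,
      weightedHomogeneousComponent (wt n) d (weightedHomogeneousComponent (wt n) d' p * e)
        = if d' = d then weightedHomogeneousComponent (wt n) d' p * e else 0 := by
    intro d'
    have hh : IsWeightedHomogeneous (wt n)
        (weightedHomogeneousComponent (wt n) d' p * e) d' := by
      simpa using (weightedHomogeneousComponent_isWeightedHomogeneous d' p).mul he0
    by_cases hdd : d' = d
    · subst hdd
      rw [if_pos rfl, hh.weightedHomogeneousComponent_same]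
    · rw [if_neg hdd]
      exact hh.weightedHomogeneousComponent_ne d fun h => hdd h.symm
  calc weightedHomogeneousComponent (wt n) d (p * e)
      = ∑ d' ∈ D, weightedHomogeneousComponent (wt n) d
          (weightedHomogeneousComponent (wt n) d' p * e) := by
        rw [← map_sum, ← Finset.sum_mul, h0]
    _ = ∑ d' ∈ D, if d' = d then weightedHomogeneousComponent (wt n) d' p * e else 0 :=
        Finset.sum_congr rfl fun d' _ => key d'
    _ = weightedHomogeneousComponent (wt n) d p * e := by
        rw [Finset.sum_ite_eq' D d fun d' => weightedHomogeneousComponent (wt n) d' p * e,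
          if_pos (Finset.mem_insert_self d _)]

lemma E0_supported (n : ℕ) (q : MvPolynomial ℕ k) :
    weightedHomogeneousComponent (wt n) 0 q ∈ supported k (Set.Iio n) := by
  rw [mem_supported]
  intro j hj
  obtain ⟨m, hm, hjm⟩ := (mem_vars j).mp hj
  have hw := weight_of_mem_support (k := k) hm
  have := congrArg (fun f : ℕ →₀ ℕ => f j) hw
  simp only [weight_wt_apply] at this
  by_cases hnj : n ≤ j
  · rw [if_pos hnj] at this
    exact absurd this (Finsupp.mem_support_iff.mp hjm)
  · simpa using Nat.lt_of_not_le hnj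

lemma constantCoeff_E0 (n : ℕ) (q : MvPolynomial ℕ k) :
    constantCoeff (weightedHomogeneousComponent (wt n) 0 q) = constantCoeff q := by
  classical
  have h : coeff 0 (weightedHomogeneousComponent (wt n) 0 q) = coeff 0 q := by
    rw [coeff_weightedHomogeneousComponent, if_pos (map_zero _)]
  simpa [constantCoeff_eq] using h

end Stmt8Aux

set_option maxHeartbeats 10000000 in
open Stmt8Aux in
/-- The row kernel over `R = k[x_i,z]/⟨x_i z⟩` of a matrix with entries in the subring `R_n`
decomposes as the direct sum of the row kernel over `R_n` and the product of the ideal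
`⟨x_i : i ≥ n⟩` with the row kernel over `k[x]` of the `x`-part of the matrix. -/
theorem stmt8 (k : Type*) [Field k] (a b n : ℕ)
    (P : Matrix (Fin a) (Fin b) (MvPolynomial (Option ℕ) k))
    (hP : ∀ i j, ∀ v ∈ (P i j).vars, v = none ∨ ∃ m, m < n ∧ v = some m) :
    let M : Matrix (Fin a) (Fin b) (Rring8 k) := P.map (Ideal.Quotient.mk (relIdeal8 k))
    let Px : Matrix (Fin a) (Fin b) (MvPolynomial ℕ k) :=
      P.map (aeval fun v : Option ℕ => v.elim 0 X)
    let S : Set (Fin a → Rring8 k) :=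
      {v | (∀ i, v i ∈ Rsub8 k n) ∧ Matrix.vecMul v M = 0}
    let T : Submodule (Rring8 k) (Fin a → Rring8 k) :=
      Submodule.span (Rring8 k)
        {w | ∃ i, n ≤ i ∧ ∃ u : Fin a → MvPolynomial ℕ k,
          Matrix.vecMul u Px = 0 ∧
          w = Ideal.Quotient.mk (relIdeal8 k) (X (some i)) •
            fun j => ((Ideal.Quotient.mkₐ k (relIdeal8 k)).comp
              (rename (some : ℕ → Option ℕ))) (u j)}
    (∀ v : Fin a → Rring8 k, Matrix.vecMul v M = 0 ↔ ∃ s ∈ S, ∃ t ∈ T, v = s + t) ∧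
    ∀ v ∈ S, v ∈ T → v = 0 := by
  classical
  intro M Px S T
  set mk₀ : MvPolynomial (Option ℕ) k →+* Rring8 k := Ideal.Quotient.mk (relIdeal8 k) with hmk₀
  have hM : ∀ i j, M i j = mk₀ (P i j) := fun i j => rfl
  have hPx : ∀ i j, Px i j = px (P i j) := fun i j => rfl
  have hvec : ∀ (v : Fin a → Rring8 k) (l : Fin b),
      Matrix.vecMul v M l = ∑ j, v j * M j l := fun v l => rfl
  have hvecP : ∀ (u : Fin a → MvPolynomial ℕ k) (l : Fin b),
      Matrix.vecMul u Px l = ∑ j, u j * Px j l := fun u l => rfl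
  have hPixM : ∀ i j, Pix (M i j) = Px i j := by
    intro i j; rw [hM, hPx]; exact Pix_mk _
  -- entries of Px are supported on low variables
  have hPxlow : ∀ i j, Px i j ∈ supported k (Set.Iio n) := by
    intro i j
    have h1 : P i j ∈ supported k (insert none ((some : ℕ → Option ℕ) '' Set.Iio n)) := by
      rw [mem_supported]
      intro v hv
      rcases hP i j v hv with h | ⟨m, hm, rfl⟩
      · subst h; exact Set.mem_insert _ _
      · exact Set.mem_insert_of_mem _ ⟨m, hm, rfl⟩
    have h2 : px (P i j) ∈ (Algebra.adjoin k
        (X '' insert none ((some : ℕ → Option ℕ) '' Set.Iio n))).map (px (k := k)) :=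
      ⟨P i j, h1, rfl⟩
    rw [AlgHom.map_adjoin] at h2
    rw [hPx]
    refine Algebra.adjoin_le ?_ h2
    rintro _ ⟨_, ⟨w, hw, rfl⟩, rfl⟩
    rcases Set.mem_insert_iff.mp hw with rfl | ⟨m, hm, rfl⟩
    · rw [px_X_none]; exact zero_mem _
    · rw [px_X_some]; exact X_mem_supported.mpr hm
  -- every element of T is in the kernel
  have hTker : ∀ t ∈ T, Matrix.vecMul t M = 0 := by
    intro t ht
    refine Submodule.span_induction ?_ ?_ ?_ ?_ ht
    · rintro w ⟨i, hi, u, hu, rfl⟩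
      funext l
      show Matrix.vecMul _ M l = 0
      rw [hvec]
      apply inj
      · rw [map_sum]
        have hterm : ∀ j, Pix ((mk₀ (X (some i)) •
            fun j' => ((Ideal.Quotient.mkₐ k (relIdeal8 k)).comp
              (rename (some : ℕ → Option ℕ))) (u j')) j * M j l)
            = X i * (u j * Px j l) := by
          intro j
          rw [Pi.smul_apply, smul_eq_mul, map_mul, map_mul, hPixM]
          have h1 : Pix (mk₀ (X (some i))) = X i := by rw [hmk₀, Pix_mk, px_X_some]
          have h2 : Pix (((Ideal.Quotient.mkₐ k (relIdeal8 k)).comp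
              (rename (some : ℕ → Option ℕ))) (u j)) = u j := by
            simp only [AlgHom.coe_comp, Function.comp_apply, Ideal.Quotient.mkₐ_eq_mk]
            rw [Pix_mk, px_rename]
          rw [h1, h2]; ring
        rw [Finset.sum_congr rfl fun j _ => hterm j, ← Finset.mul_sum, ← hvecP, hu]
        simp
      · rw [map_sum]
        apply Finset.sum_eq_zero
        intro j _
        rw [Pi.smul_apply, smul_eq_mul, map_mul, map_mul]
        have h1 : Piz (mk₀ (X (some i))) = 0 := by rw [hmk₀, Piz_mk, pz_X_some]
        rw [h1, zero_mul, zero_mul]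
    · exact Matrix.zero_vecMul M
    · intro x y _ _ hx hy
      rw [Matrix.add_vecMul, hx, hy, add_zero]
    · intro r x _ hx
      funext l
      show Matrix.vecMul (r • x) M l = 0
      rw [hvec]
      have h1 : ∀ j, (r • x) j * M j l = r * (x j * M j l) := fun j => by
        rw [Pi.smul_apply, smul_eq_mul, mul_assoc]
      rw [Finset.sum_congr rfl fun j _ => h1 j, ← Finset.mul_sum, ← hvec, hx]
      simp
  refine ⟨fun v => ⟨fun hv => ?_, ?_⟩, fun v hvS hvT => ?_⟩
  · -- forward direction: decompose a kernel element
    set u : Fin a → MvPolynomial ℕ k := fun j => Pix (v j) with hu_def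
    have hu : ∀ l, ∑ j, u j * Px j l = 0 := by
      intro l
      have h1 := congrFun hv l
      rw [hvec, Pi.zero_apply] at h1
      have h2 := congrArg Pix h1
      rw [map_sum, map_zero] at h2
      have h3 : ∀ j : Fin a, Pix (v j * M j l) = u j * Px j l := fun j => by
        rw [map_mul, hPixM]
      rw [← h2]
      exact (Finset.sum_congr rfl fun j _ => h3 j).symm
    set E : (ℕ →₀ ℕ) → MvPolynomial ℕ k → MvPolynomial ℕ k :=
      fun d => weightedHomogeneousComponent (wt n) d with hE_def
    have hE : ∀ (d : ℕ →₀ ℕ) (l : Fin b), ∑ j, E d (u j) * Px j l = 0 := by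
      intro d l
      have h1 : ∑ j, E d (u j) * Px j l = E d (∑ j, u j * Px j l) := by
        simp only [hE_def]
        rw [map_sum]
        exact Finset.sum_congr rfl fun j _ => (E_mul_low n d (u j) _ (hPxlow j l)).symm
      rw [h1, hu]
      simp only [hE_def]
      rw [map_zero]
    set mkr : MvPolynomial ℕ k → Rring8 k := fun e => mk₀ (rename some e) with hmkr
    set s : Fin a → Rring8 k := fun j => mkr (E 0 (u j)) + (v j - mkr (u j)) with hs_def
    have hPix_mkr : ∀ e, Pix (mkr e) = e := fun e => by rw [hmkr, hmk₀, Pix_mk, px_rename]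
    have hPiz_mkr : ∀ e, Piz (mkr e) = Polynomial.C (constantCoeff e) := fun e => by
      rw [hmkr, hmk₀, Piz_mk, pz_rename]
    have hPix_s : ∀ j, Pix (s j) = E 0 (u j) := by
      intro j
      have hvj : Pix (v j) = u j := rfl
      rw [hs_def]
      simp only [map_add, map_sub, hPix_mkr]
      rw [hvj]
      ring
    have hPiz_s : ∀ j, Piz (s j) = Piz (v j) := by
      intro j
      rw [hs_def]
      simp only [map_add, map_sub, hPiz_mkr]
      simp only [hE_def]
      rw [constantCoeff_E0]
      ring
    have hsS : s ∈ S := by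
      refine ⟨fun j => ?_, ?_⟩
      · apply Subalgebra.add_mem
        · -- low part lies in R_n
          have h1 : E 0 (u j) ∈ supported k (Set.Iio n) := E0_supported n (u j)
          set F : MvPolynomial ℕ k →ₐ[k] Rring8 k :=
            (Ideal.Quotient.mkₐ k (relIdeal8 k)).comp (rename (some : ℕ → Option ℕ)) with hF
          have h2 : F (E 0 (u j)) ∈ (Algebra.adjoin k
              (X '' Set.Iio n : Set (MvPolynomial ℕ k))).map F := ⟨E 0 (u j), h1, rfl⟩
          rw [AlgHom.map_adjoin] at h2
          have h3 : (⇑F '' (X '' Set.Iio n))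
              ⊆ (insert (Ideal.Quotient.mk (relIdeal8 k) (X none))
                ((fun i : ℕ => Ideal.Quotient.mk (relIdeal8 k) (X (some i))) '' Set.Iio n)) := by
            rintro _ ⟨_, ⟨i, hi, rfl⟩, rfl⟩
            refine Set.mem_insert_of_mem _ ⟨i, hi, ?_⟩
            rw [hF]
            simp [Ideal.Quotient.mkₐ_eq_mk]
          have h4 : F (E 0 (u j)) ∈ Rsub8 k n := by
            rw [Rsub8]
            exact Algebra.adjoin_mono h3 h2
          have h5 : F (E 0 (u j)) = mkr (E 0 (u j)) := by
            rw [hF, hmkr, hmk₀]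
            simp [Ideal.Quotient.mkₐ_eq_mk]
          rwa [h5] at h4
        · -- z-part lies in R_n
          have h1 : Pix (v j - mkr (u j)) = 0 := by
            have hvj : Pix (v j) = u j := rfl
            rw [map_sub, hPix_mkr, hvj, sub_self]
          have h2 := mem_adjoin_z _ h1
          rw [Rsub8]
          refine Algebra.adjoin_mono ?_ h2
          intro x hx
          rw [Set.mem_singleton_iff] at hx
          subst hx
          exact Set.mem_insert _ _
      · funext l
        show Matrix.vecMul s M l = 0
        rw [hvec]
        apply inj
        · rw [map_sum]
          have h1 : ∀ j, Pix (s j * M j l) = E 0 (u j) * Px j l := by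
            intro j; rw [map_mul, hPixM, hPix_s]
          rw [Finset.sum_congr rfl fun j _ => h1 j, hE 0 l]
        · rw [map_sum]
          have h1 : ∀ j, Piz (s j * M j l) = Piz (v j * M j l) := by
            intro j; rw [map_mul, map_mul, hPiz_s]
          rw [Finset.sum_congr rfl fun j _ => h1 j, ← map_sum, ← hvec, hv]
          simp
    set t : Fin a → Rring8 k := v - s with ht_def
    have htT : t ∈ T := by
      set D : Finset (ℕ →₀ ℕ) :=
        (Finset.univ.biUnion fun j : Fin a => (u j).support.image (Finsupp.weight (wt n)))
          ∪ {0} with hD_def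
      have h0D : (0 : ℕ →₀ ℕ) ∈ D := Finset.mem_union_right _ (Finset.mem_singleton_self 0)
      have hDj : ∀ j, ∑ d ∈ D, E d (u j) = u j := by
        intro j
        refine decomp n (u j) D fun m hm => ?_
        exact Finset.mem_union_left _
          (Finset.mem_biUnion.mpr ⟨j, Finset.mem_univ j, Finset.mem_image_of_mem _ hm⟩)
      have ht_eq : t = ∑ d ∈ D.erase 0, fun j => mkr (E d (u j)) := by
        funext j
        have h1 : t j = mkr (u j) - mkr (E 0 (u j)) := by
          rw [ht_def]
          show v j - (mkr (E 0 (u j)) + (v j - mkr (u j))) = _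
          ring
        have h2 : ∑ d ∈ D.erase 0, E d (u j) = u j - E 0 (u j) := by
          have h3 := Finset.add_sum_erase D (fun d => E d (u j)) h0D
          rw [hDj j] at h3
          exact eq_sub_of_add_eq' h3
        have h4 : mkr (u j) - mkr (E 0 (u j)) = mkr (∑ d ∈ D.erase 0, E d (u j)) := by
          rw [h2, hmkr]
          simp only [map_sub]
        rw [h1, h4, Finset.sum_apply]
        simp only [hmkr, map_sum]
      rw [ht_eq]
      apply Submodule.sum_mem
      intro d hd
      by_cases hzero : ∀ j, E d (u j) = 0
      · have hfz : (fun j => mkr (E d (u j))) = (0 : Fin a → Rring8 k) := by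
          funext j
          rw [hzero j, hmkr]
          simp
        rw [hfz]
        exact zero_mem _
      · push_neg at hzero
        obtain ⟨j0, hj0⟩ := hzero
        have hne : ∃ m ∈ (u j0).support, Finsupp.weight (wt n) m = d := by
          by_contra h
          push_neg at h
          exact hj0 (weightedHomogeneousComponent_eq_zero' d (u j0) h)
        obtain ⟨m, hm, hwd⟩ := hne
        have hd0 : d ≠ 0 := Finset.ne_of_mem_erase hd
        have hex : ∃ i, d i ≠ 0 := by
          by_contra h
          push_neg at h
          exact hd0 (Finsupp.ext h)
        obtain ⟨i, hdi⟩ := hex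
        have hni : n ≤ i := by
          by_contra h
          apply hdi
          rw [← hwd, weight_wt_apply, if_neg h]
        have hdvd : ∀ j, ∃ c, E d (u j) = X i * c := by
          intro j
          have hmem : E d (u j) ∈ Ideal.span (X '' ({i} : Set ℕ)) := by
            rw [mem_ideal_span_X_image]
            intro m' hm'
            refine ⟨i, rfl, ?_⟩
            have hw' := weight_of_mem_support (k := k) hm'
            have h5 := congrArg (fun f : ℕ →₀ ℕ => f i) hw'
            simp only [weight_wt_apply, if_pos hni] at h5
            rw [h5]
            exact hdi
          rw [Set.image_singleton, Ideal.mem_span_singleton] at hmem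
          obtain ⟨c, hc⟩ := hmem
          exact ⟨c, hc⟩
        choose c hc using hdvd
        have hcker : Matrix.vecMul c Px = 0 := by
          funext l
          show Matrix.vecMul c Px l = 0
          rw [hvecP]
          have h1 := hE d l
          have h2 : (X i : MvPolynomial ℕ k) * ∑ j, c j * Px j l = 0 := by
            rw [Finset.mul_sum, ← h1]
            exact Finset.sum_congr rfl fun j _ => by rw [hc j]; ring
          rcases mul_eq_zero.mp h2 with h | h
          · exact absurd h (MvPolynomial.X_ne_zero i)
          · exact h
        refine Submodule.subset_span ⟨i, hni, c, hcker, ?_⟩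
        funext j
        show mkr (E d (u j)) = _
        rw [Pi.smul_apply, smul_eq_mul, hc j, hmkr]
        simp only [AlgHom.coe_comp, Function.comp_apply, Ideal.Quotient.mkₐ_eq_mk]
        rw [map_mul, rename_X, map_mul]
    refine ⟨s, hsS, t, htT, ?_⟩
    rw [ht_def]
    funext j
    show v j = s j + (v j - s j)
    ring
  · -- backward direction
    rintro ⟨s, hsS, t, htT, rfl⟩
    rw [Matrix.add_vecMul, hsS.2, hTker t htT, add_zero]
  · -- S ∩ T = 0
    funext j
    show v j = 0
    apply inj
    · -- Pix (v j) = 0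
      have h1 : ∀ i, Pix (v i) ∈ Ideal.span (X '' {i : ℕ | n ≤ i}) := by
        refine Submodule.span_induction
          (p := fun x _ => ∀ i, Pix (x i) ∈ Ideal.span (X '' {i : ℕ | n ≤ i}))
          ?_ ?_ ?_ ?_ hvT
        · rintro w ⟨i, hi, u, hu, rfl⟩ j'
          rw [Pi.smul_apply, smul_eq_mul, map_mul]
          have h2 : Pix (mk₀ (X (some i))) = X i := by rw [hmk₀, Pix_mk, px_X_some]
          rw [h2]
          exact Ideal.mul_mem_right _ _ (Ideal.subset_span ⟨i, hi, rfl⟩)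
        · intro j'; simp
        · intro x y _ _ hx hy j'
          rw [Pi.add_apply, map_add]
          exact add_mem (hx j') (hy j')
        · intro r x _ hx j'
          rw [Pi.smul_apply, smul_eq_mul, map_mul]
          exact Ideal.mul_mem_left _ _ (hx j')
      have h2 : Pix (v j) ∈ supported k (Set.Iio n) := by
        have hmem := hvS.1 j
        have h3 : Pix (v j) ∈ (Rsub8 k n).map (Pix (k := k)) := ⟨v j, hmem, rfl⟩
        rw [Rsub8, AlgHom.map_adjoin] at h3
        refine Algebra.adjoin_le ?_ h3
        rintro _ ⟨y, hy, rfl⟩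
        rcases Set.mem_insert_iff.mp hy with rfl | ⟨i, hi, rfl⟩
        · rw [Pix_mk, px_X_none]; exact zero_mem _
        · rw [Pix_mk, px_X_some]; exact X_mem_supported.mpr hi
      by_contra hne
      have hsupp : (Pix (v j)).support.Nonempty := by
        rw [Finset.nonempty_iff_ne_empty]
        intro h
        exact hne (MvPolynomial.support_eq_empty.mp h)
      obtain ⟨m, hm⟩ := hsupp
      obtain ⟨i, hi, hmi⟩ := mem_ideal_span_X_image.mp (h1 j) m hm
      have hiv : i ∈ (Pix (v j)).vars := (mem_vars i).mpr
        ⟨m, hm, Finsupp.mem_support_iff.mpr hmi⟩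
      have := mem_supported.mp h2 hiv
      simp only [Set.mem_Iio] at this
      simp only [Set.mem_setOf_eq] at hi
      omega
    · -- Piz (v j) = 0
      have h1 : ∀ i, Piz (v i) = 0 := by
        refine Submodule.span_induction
          (p := fun x _ => ∀ i, Piz (x i) = 0) ?_ ?_ ?_ ?_ hvT
        · rintro w ⟨i, hi, u, hu, rfl⟩ j'
          rw [Pi.smul_apply, smul_eq_mul, map_mul]
          have h2 : Piz (mk₀ (X (some i))) = 0 := by rw [hmk₀, Piz_mk, pz_X_some]
          rw [h2, zero_mul]
        · intro j'; simp
        · intro x y _ _ hx hy j'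
          rw [Pi.add_apply, map_add, hx, hy, add_zero]
        · intro r x _ hx j'
          rw [Pi.smul_apply, smul_eq_mul, map_mul, hx, mul_zero]
      exact h1 j
end

section
/- For an additive category P, the syzygy inclusion Syz(A →γ B ← 0) ⊆ Syz(A →γ' B' ←ρ' C') for one cospan with zero relations is equivalent to the general syzygy inclusion after stacking: Syz(A →γ B ←ρ C) ⊆ Syz(A →γ' B' ←ρ' C') iff Syz(A⊕C →(γ;ρ) B ← 0) ⊆ Syz(A⊕C →(γ';0) B' ←ρ' C'). -/
open CategoryTheory CategoryTheory.Limits ZeroObject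

/-- The syzygy inclusion `Syz(A →γ B ← 0) ⊆ Syz(A →γ' B' ←ρ' C')` for cospans with zero
relations suffices: the general syzygy inclusion
`Syz(A →γ B ←ρ C) ⊆ Syz(A →γ' B' ←ρ' C')` holds iff
`Syz(A⊕C →(γ;ρ) B ← 0) ⊆ Syz(A⊕C →(γ';0) B' ←ρ' C')`. -/
theorem stmt10 {P : Type*} [Category P] [Preadditive P] [HasBinaryBiproducts P]
    [HasZeroObject P] {A B C B' C' : P}
    (γ : A ⟶ B) (ρ : C ⟶ B) (γ' : A ⟶ B') (ρ' : C' ⟶ B') :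
    (∀ {S : P} (σ : S ⟶ A),
        (∃ ω : S ⟶ C, σ ≫ γ = ω ≫ ρ) → ∃ ω' : S ⟶ C', σ ≫ γ' = ω' ≫ ρ') ↔
    (∀ {S : P} (σ : S ⟶ A ⊞ C),
        (∃ ω : S ⟶ (0 : P), σ ≫ biprod.desc γ ρ = ω ≫ (0 : (0 : P) ⟶ B)) →
        ∃ ω' : S ⟶ C', σ ≫ biprod.desc γ' (0 : C ⟶ B') = ω' ≫ ρ') := by
  constructor
  · intro h S σ ⟨ω, hω⟩
    have h0 : σ ≫ biprod.desc γ ρ = 0 := by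
      rw [hω]; simp
    have hsyz : (σ ≫ biprod.fst) ≫ γ = (-(σ ≫ biprod.snd)) ≫ ρ := by
      have : σ ≫ biprod.fst ≫ γ + σ ≫ biprod.snd ≫ ρ = 0 := by
        have := h0
        rw [show biprod.desc γ ρ = biprod.fst ≫ γ + biprod.snd ≫ ρ by ext <;> simp] at this
        simpa [Preadditive.comp_add] using this
      simp only [Category.assoc, Preadditive.neg_comp]
      exact eq_neg_of_add_eq_zero_left this
    obtain ⟨ω', hω'⟩ := h (σ ≫ biprod.fst) ⟨-(σ ≫ biprod.snd), hsyz⟩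
    refine ⟨ω', ?_⟩
    have : σ ≫ biprod.desc γ' (0 : C ⟶ B') = (σ ≫ biprod.fst) ≫ γ' := by
      rw [show biprod.desc γ' (0 : C ⟶ B') = biprod.fst ≫ γ' by ext <;> simp]
      simp [Category.assoc]
    rw [this, hω']
  · intro h S σ ⟨ω, hω⟩
    have key : biprod.lift σ (-ω) ≫ biprod.desc γ ρ = 0 := by
      simp [hω]
    obtain ⟨ω', hω'⟩ := h (biprod.lift σ (-ω)) ⟨0, by simp [key]⟩
    refine ⟨ω', ?_⟩
    simpa using hω'
end
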